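/- Let 𝕊 : M₃ → M₃ be a linear map, ρ > 0, w ∈ ℝ³ a unit vector, and define E(w) : ℝ³ → ℝ³ by E(w)u = (𝕊[u ⊗ w]) w. (i) A pair (Z, z) ∈ M₃ × ℝ³ satisfies the system −ρ⁻¹ (z ⊗ w) = λ Z, −(𝕊[Z]) w = λ z with λ = 0 if and only if z = 0 and (𝕊[Z]) w = 0. (ii) If moreover E(w) is invertible, then the linear map Φ_w : M₃ → ℝ³, Φ_w(Z) = (𝕊[Z]) w, is surjective (given y ∈ ℝ³, Z = (E(w)⁻¹ y) ⊗ w satisfies Φ_w(Z) = y), and hence its kernel {Z ∈ M₃ : (𝕊[Z]) w = 0} is a subspace of M₃ of dimension exactly 6. Consequently the zero proper number of the hyperbolicity matrix has geometric multiplicity six. -/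

import Mathlib

open scoped RealInnerProductSpace

noncomputable section

abbrev M3 : Type := EuclideanSpace ℝ (Fin 3 × Fin 3)
abbrev R3 : Type := EuclideanSpace ℝ (Fin 3)

/-- The dyadic product `(z ⊗ w)_{ij} = z_i w_j`. -/
def dyad (z w : R3) : M3 :=
  (WithLp.equiv 2 ((Fin 3 × Fin 3) → ℝ)).symm fun ij => z ij.1 * w ij.2

/-- Matrix-vector product `(M w)_i = Σ_j M_{ij} w_j`. -/
def matVec (M : M3) (w : R3) : R3 :=
  (WithLp.equiv 2 (Fin 3 → ℝ)).symm fun i => ∑ j, M (i, j) * w j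

/-- The acoustic tensor `E(w) u = (𝕊[u ⊗ w]) w`. -/
def acoustic (S : M3 →ₗ[ℝ] M3) (w u : R3) : R3 :=
  matVec (S (dyad u w)) w

/-- The linear map `Φ_w : Z ↦ (𝕊[Z]) w`. -/
def phiMap (S : M3 →ₗ[ℝ] M3) (w : R3) : M3 →ₗ[ℝ] R3 where
  toFun Z := matVec (S Z) w
  map_add' Z Z' := by
    ext i
    simp [matVec, map_add, Finset.sum_add_distrib, add_mul, PiLp.add_apply]
  map_smul' r Z := by
    ext i
    simp [matVec, map_smul, Finset.mul_sum, mul_assoc, PiLp.smul_apply, smul_eq_mul]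

/-! With `λ = 0` the system degenerates to `z ⊗ w = 0` and `(𝕊[Z]) w = 0`, and
`z ⊗ w = 0` forces `z = 0` because `w ≠ 0`. Since `Φ_w (u ⊗ w) = E(w) u`, invertibility of
`E(w)` makes `Φ_w` surjective onto `ℝ³`, so rank–nullity gives `dim ker Φ_w = 9 - 3 = 6`. -/

theorem dyad_eq_zero_iff {z w : R3} : dyad z w = 0 ↔ z = 0 ∨ w = 0 := by
  constructor
  · intro h
    by_contra! hzw
    obtain ⟨i, hi⟩ : ∃ i, z i ≠ 0 := by
      by_contra! hz
      exact hzw.1 (PiLp.ext hz)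
    obtain ⟨j, hj⟩ : ∃ j, w j ≠ 0 := by
      by_contra! hw
      exact hzw.2 (PiLp.ext hw)
    have hij : z i * w j = 0 := congrFun (congrArg (WithLp.equiv 2 _) h) (i, j)
    exact mul_ne_zero hi hj hij
  · rintro (rfl | rfl) <;> ext ij <;> simp [dyad]

theorem phiMap_dyad (S : M3 →ₗ[ℝ] M3) (w u : R3) : phiMap S w (dyad u w) = acoustic S w u :=
  rfl

theorem zero_eigen_system_iff (S : M3 →ₗ[ℝ] M3) {ρ : ℝ} (hρ : ρ ≠ 0) {w : R3} (hw : w ≠ 0)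
    (Z : M3) (z : R3) :
    ((-ρ⁻¹) • dyad z w = (0 : ℝ) • Z ∧ -(matVec (S Z) w) = (0 : ℝ) • z)
      ↔ (z = 0 ∧ matVec (S Z) w = 0) := by
  simp only [zero_smul, neg_eq_zero, smul_eq_zero, inv_eq_zero, hρ, false_or,
    dyad_eq_zero_iff, hw, or_false]

theorem phiMap_surjective {S : M3 →ₗ[ℝ] M3} {w : R3} (hE : Function.Surjective (acoustic S w)) :
    Function.Surjective (phiMap S w) := fun y ↦
  let ⟨u, hu⟩ := hE y
  ⟨dyad u w, (phiMap_dyad S w u).trans hu⟩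

theorem finrank_ker_phiMap {S : M3 →ₗ[ℝ] M3} {w : R3} (hΦ : Function.Surjective (phiMap S w)) :
    Module.finrank ℝ (LinearMap.ker (phiMap S w)) = 6 := by
  have hrank := LinearMap.finrank_range_add_finrank_ker (phiMap S w)
  rw [LinearMap.range_eq_top.mpr hΦ, finrank_top] at hrank
  simp only [finrank_euclideanSpace, Fintype.card_prod, Fintype.card_fin] at hrank
  omega

/-- Zero-eigenvalue part of Proposition 5: (i) `(Z, z)` solves the eigenvalue system with
`λ = 0` iff `z = 0` and `(𝕊[Z])w = 0`; (ii) if the acoustic tensor `E(w)` is invertible,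
then `Φ_w : Z ↦ (𝕊[Z])w` is surjective (with explicit preimage `(E(w)⁻¹ y) ⊗ w`), hence
its kernel has dimension exactly `6`: zero is a proper number of geometric multiplicity
six. -/
theorem stmt15 (S : M3 →ₗ[ℝ] M3) (ρ : ℝ) (hρ : 0 < ρ)
    (w : R3) (hw : ‖w‖ = 1) :
    (∀ (Z : M3) (z : R3),
      ((-ρ⁻¹) • dyad z w = (0 : ℝ) • Z ∧ -(matVec (S Z) w) = (0 : ℝ) • z)
        ↔ (z = 0 ∧ matVec (S Z) w = 0)) ∧
    (Function.Bijective (acoustic S w) →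
      ((∀ (y u : R3), acoustic S w u = y → matVec (S (dyad u w)) w = y) ∧
       Function.Surjective (phiMap S w) ∧
       Module.finrank ℝ (LinearMap.ker (phiMap S w)) = 6)) := by
  have hw0 : w ≠ 0 := by
    rintro rfl
    simp at hw
  refine ⟨zero_eigen_system_iff S hρ.ne' hw0, fun hE ↦ ?_⟩
  have hΦ := phiMap_surjective hE.2
  exact ⟨fun _ _ hu ↦ hu, hΦ, finrank_ker_phiMap hΦ⟩
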